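/- Let (ℒ, 𝒜) be a complete duality pair over a commutative ring R. Then the class of Gorenstein (ℒ,𝒜)-injective R-modules is closed under arbitrary direct products: if (M_i)_{i ∈ I} is a family of Gorenstein (ℒ,𝒜)-injective R-modules, then ∏_{i ∈ I} M_i is Gorenstein (ℒ,𝒜)-injective. -/

import Mathlib

open CategoryTheory

universe w u

/-- The character module `M⁺ = Hom_ℤ(M, ℚ/ℤ)` of `M`, as an object of `ModuleCat R`
(with the `R`-action `(r • f) x = f (r • x)`). -/
noncomputable def charMod (R : Type u) [CommRing R] (M : ModuleCat.{u} R) : ModuleCat.{u} R :=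
  ModuleCat.of R (CharacterModule M)

/-- `(𝓜, 𝓒)` is a duality pair over `R`: both classes are closed under isomorphism,
`M ∈ 𝓜 ↔ M⁺ ∈ 𝓒`, and `𝓒` is closed under direct summands and finite direct sums. -/
structure IsDualityPair (R : Type u) [CommRing R]
    (Mc Cc : ModuleCat.{u} R → Prop) : Prop where
  isoClosed_fst : ∀ {A B : ModuleCat.{u} R}, (A ≅ B) → Mc A → Mc B
  isoClosed_snd : ∀ {A B : ModuleCat.{u} R}, (A ≅ B) → Cc A → Cc B
  char_mem_iff : ∀ M : ModuleCat.{u} R, Mc M ↔ Cc (charMod R M)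
  summand_closed : ∀ A B : ModuleCat.{u} R, Cc (ModuleCat.of R (A × B)) → Cc A
  finSum_closed : ∀ A B : ModuleCat.{u} R, Cc A → Cc B → Cc (ModuleCat.of R (A × B))

/-- A duality pair `(𝓜, 𝓒)` is perfect if `R ∈ 𝓜` and `𝓜` is closed under arbitrary
direct sums and under extensions. -/
structure IsPerfectDualityPair (R : Type u) [CommRing R]
    (Mc Cc : ModuleCat.{u} R → Prop) extends IsDualityPair R Mc Cc : Prop where
  self_mem : Mc (ModuleCat.of R R)
  directSum_closed : ∀ (ι : Type u) (A : ι → ModuleCat.{u} R),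
    (∀ i, Mc (A i)) → Mc (ModuleCat.of R (DirectSum ι (fun i => A i)))
  extension_closed : ∀ S : ShortComplex (ModuleCat.{u} R),
    S.ShortExact → Mc S.X₁ → Mc S.X₃ → Mc S.X₂

/-- `(ℒ, 𝒜)` is a complete duality pair: `{ℒ, 𝒜}` is a symmetric duality pair
with `(ℒ, 𝒜)` perfect. -/
structure IsCompleteDualityPair (R : Type u) [CommRing R]
    (Lc Ac : ModuleCat.{u} R → Prop) : Prop where
  perfect : IsPerfectDualityPair R Lc Ac
  snd : IsDualityPair R Ac Lc

/-- The chain complex of abelian groups `Hom_R(M, X)` induced by a chain complex `X`. -/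
noncomputable def homFromComplex (R : Type u) [CommRing R] (M : ModuleCat.{u} R)
    (X : ChainComplex (ModuleCat.{u} R) ℤ) : ChainComplex AddCommGrpCat.{u} ℤ :=
  ((preadditiveCoyoneda.obj (Opposite.op M)).mapHomologicalComplex _).obj X

/-- A complex is exact if its homology vanishes in every degree. -/
def ComplexExact {V : Type*} [Category V] [Limits.HasZeroMorphisms V] {ι : Type*}
    {c : ComplexShape ι} (X : HomologicalComplex V c) : Prop :=
  ∀ n, X.ExactAt n

/-- `M` is Gorenstein `(ℒ,𝒜)`-injective: `M ≅ Z₀I` for some exact complex `I` of injectives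
such that `Hom_R(A, I)` is exact for all `A ∈ 𝒜`. -/
def IsGorensteinInjective (R : Type u) [CommRing R]
    (Ac : ModuleCat.{u} R → Prop) (M : ModuleCat.{u} R) : Prop :=
  ∃ I : ChainComplex (ModuleCat.{u} R) ℤ,
    (∀ n, Injective (I.X n)) ∧ ComplexExact I ∧
      (∀ A, Ac A → ComplexExact (homFromComplex R A I)) ∧
      Nonempty (M ≅ I.cycles 0)

/-!
Choose for every `M i` an exact complex `I i` of injectives with `Hom_R(A, I i)` exact for
`A ∈ 𝒜` and `M i ≅ Z₀(I i)`. The degreewise product `∏ I i` works for `∏ M i`: a product of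
injectives is injective, products of exact sequences of modules or abelian groups are exact,
`Hom_R(A, ∏ I i) = ∏ Hom_R(A, I i)`, and cycles commute with products.
-/

namespace LinearMap

variable {R : Type*} [Semiring R] {ι : Type*} {N P : ι → Type*}
  [∀ i, AddCommMonoid (N i)] [∀ i, Module R (N i)]
  [∀ i, AddCommMonoid (P i)] [∀ i, Module R (P i)]

def kerPiMapEquiv (f : ∀ i, N i →ₗ[R] P i) : ker (piMap f) ≃ₗ[R] ∀ i, ker (f i) where
  toFun x i := ⟨x.1 i, congrFun (mem_ker.mp x.2) i⟩
  invFun y := ⟨fun i => y i, mem_ker.mpr (funext fun i => (y i).2)⟩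
  map_add' _ _ := rfl
  map_smul' _ _ := rfl
  left_inv _ := rfl
  right_inv _ := rfl

end LinearMap

namespace HomologicalComplex

variable {κ : Type*} {c : ComplexShape κ}

lemma exactAt_iff_moduleCat {R : Type u} [Ring R] (X : HomologicalComplex (ModuleCat.{u} R) c)
    (j : κ) : X.ExactAt j ↔ ∀ x : X.X j, X.d j (c.next j) x = 0 →
      ∃ y : X.X (c.prev j), X.d (c.prev j) j y = x := by
  rw [X.exactAt_iff' (c.prev j) j (c.next j) rfl rfl]
  exact (X.sc' _ j _).moduleCat_exact_iff

lemma exactAt_iff_addCommGrp (X : HomologicalComplex AddCommGrpCat.{u} c) (j : κ) :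
    X.ExactAt j ↔ ∀ x : X.X j, X.d j (c.next j) x = 0 →
      ∃ y : X.X (c.prev j), X.d (c.prev j) j y = x := by
  rw [X.exactAt_iff' (c.prev j) j (c.next j) rfl rfl]
  exact (X.sc' _ j _).ab_exact_iff

end HomologicalComplex

namespace HomologicalComplex

variable {R : Type u} [Ring R] {κ : Type*} {c : ComplexShape κ} {ι : Type u}
  (I : ι → HomologicalComplex (ModuleCat.{u} R) c)

noncomputable def pi : HomologicalComplex (ModuleCat.{u} R) c where
  X j := ModuleCat.of R (∀ i, (I i).X j)
  d j k := ModuleCat.ofHom (LinearMap.piMap fun i => ((I i).d j k).hom)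
  shape j k h := by
    ext x i
    exact congr($((I i).shape j k h) (x i))
  d_comp_d' j k l _ _ := by
    ext x i
    exact congr($((I i).d_comp_d j k l) (x i))

lemma injective_pi_X {j : κ} (h : ∀ i, Injective ((I i).X j)) : Injective ((pi I).X j) :=
  have := h
  Injective.of_iso (ModuleCat.piIsoPi fun i => (I i).X j) inferInstance

lemma exactAt_pi {j : κ} (h : ∀ i, (I i).ExactAt j) : (pi I).ExactAt j := by
  rw [exactAt_iff_moduleCat]
  intro x hx
  choose y hy using fun i => (exactAt_iff_moduleCat (I i) j).1 (h i) (x i) congr($hx i)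
  exact ⟨y, funext hy⟩

noncomputable def piCyclesIso (j : κ) :
    (pi I).cycles j ≅ ModuleCat.of R (∀ i, (I i).cycles j) :=
  ((pi I).sc j).moduleCatCyclesIso ≪≫
    (LinearMap.kerPiMapEquiv fun i => ((I i).sc j).g.hom).toModuleIso ≪≫
    (LinearEquiv.piCongrRight fun i =>
      ((I i).sc j).moduleCatCyclesIso.symm.toLinearEquiv).toModuleIso

end HomologicalComplex

lemma homFromComplex_exactAt_iff {R : Type u} [CommRing R] (A : ModuleCat.{u} R)
    (X : ChainComplex (ModuleCat.{u} R) ℤ) (n : ℤ) :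
    (homFromComplex R A X).ExactAt n ↔ ∀ f : A ⟶ X.X n, f ≫ X.d n (n - 1) = 0 →
      ∃ g : A ⟶ X.X (n + 1), g ≫ X.d (n + 1) n = f := by
  rw [HomologicalComplex.exactAt_iff_addCommGrp, ChainComplex.prev, ChainComplex.next]
  rfl

lemma homFromComplex_pi_exactAt {R : Type u} [CommRing R] {ι : Type u}
    (I : ι → ChainComplex (ModuleCat.{u} R) ℤ) (A : ModuleCat.{u} R) {n : ℤ}
    (h : ∀ i, (homFromComplex R A (I i)).ExactAt n) :
    (homFromComplex R A (HomologicalComplex.pi I)).ExactAt n := by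
  rw [homFromComplex_exactAt_iff]
  intro f hf
  let proj (i : ι) {m : ℤ} : (HomologicalComplex.pi I).X m ⟶ (I i).X m :=
    ModuleCat.ofHom (LinearMap.proj i)
  have hproj (i : ι) {m m' : ℤ} :
      (HomologicalComplex.pi I).d m m' ≫ proj i = proj i ≫ (I i).d m m' := rfl
  choose g hg using fun i => (homFromComplex_exactAt_iff A (I i) n).1 (h i) (f ≫ proj i)
    (by rw [Category.assoc, ← hproj, reassoc_of% hf, Limits.zero_comp])
  refine ⟨ModuleCat.ofHom (LinearMap.pi fun i => (g i).hom), ?_⟩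
  ext a : 2
  funext i
  exact congr($(hg i) a)

theorem gorensteinInjective_closed_under_products
    (R : Type u) [CommRing R] (Ac : ModuleCat.{u} R → Prop)
    (ι : Type u) (M : ι → ModuleCat.{u} R)
    (hM : ∀ i, IsGorensteinInjective R Ac (M i)) :
    IsGorensteinInjective R Ac (ModuleCat.of R (∀ i, M i)) := by
  choose I hInj hExact hHom hIso using hM
  refine ⟨HomologicalComplex.pi I, fun n => HomologicalComplex.injective_pi_X I (hInj · n),
    fun n => HomologicalComplex.exactAt_pi I (hExact · n),
    fun A hA n => homFromComplex_pi_exactAt I A (hHom · A hA n), ⟨?_⟩⟩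
  exact (LinearEquiv.piCongrRight fun i => (hIso i).some.toLinearEquiv).toModuleIso ≪≫
    (HomologicalComplex.piCyclesIso I 0).symm
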